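/- Equal indicial exponents exclude squared logarithms and make the no-logs condition boundary-independent: Let λ ∈ ℤ, let ℓ̂ ∈ ℤ with ℓ̂ ≤ λ, let (h_k)_{k≥1} be a sequence of real 2×2 matrices and (g_n)_{n≥ℓ̂} a sequence of vectors in ℝ². Suppose the ℝ²-valued sequences (f⁰_n, f¹_n, f²_n)_{n≥ℓ̂} satisfy, for all n ≥ ℓ̂ (with coefficients of index < ℓ̂ set to zero): (n−λ)·f²_n + Σ_{k=1}^{n−ℓ̂} h_k·f²_{n−k} = 0; 2·f²_n + (n−λ)·f¹_n + Σ_{k=1}^{n−ℓ̂} h_k·f¹_{n−k} = 0; and f¹_n + (n−λ)·f⁰_n + Σ_{k=1}^{n−ℓ̂} h_k·f⁰_{n−k} = g_n. Then f²_n = 0 for all n ≥ ℓ̂; moreover, the coefficients f⁰_n with ℓ̂ ≤ n < λ are uniquely determined (independently of the free integration constants f⁰_λ ∈ ℝ²), and (f¹_n) vanishes identically if and only if Σ_{k=1}^{λ−ℓ̂} h_k·f⁰_{λ−k} = g_λ, a condition involving only (h_k) and (g_n). -/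
import Mathlib


open Matrix

/-- The recursion relations for the formal solution
`f ~ Σ f⁰_n xⁿ + log x·Σ f¹_n xⁿ + log²x·Σ f²_n xⁿ` of the 2×2 Fuchsian system whose
indicial matrix is `−λ·Id` (equal indicial exponents `λ₁ = λ₂ = λ ∈ ℤ`). -/
def RecEqual (lam lhat : ℤ) (hcoef : ℤ → Matrix (Fin 2) (Fin 2) ℝ)
    (g : ℤ → Fin 2 → ℝ)
    (t : (ℤ → Fin 2 → ℝ) × (ℤ → Fin 2 → ℝ) × (ℤ → Fin 2 → ℝ)) : Prop :=
  (∀ m : ℤ, m < lhat → t.1 m = 0 ∧ t.2.1 m = 0 ∧ t.2.2 m = 0) ∧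
  ∀ n : ℤ, lhat ≤ n →
    (((n : ℝ) - (lam : ℝ)) • t.2.2 n
        + ∑ k ∈ Finset.Icc 1 (n - lhat), hcoef k *ᵥ t.2.2 (n - k) = 0) ∧
    ((2 : ℝ) • t.2.2 n + ((n : ℝ) - (lam : ℝ)) • t.2.1 n
        + ∑ k ∈ Finset.Icc 1 (n - lhat), hcoef k *ᵥ t.2.1 (n - k) = 0) ∧
    (t.2.1 n + ((n : ℝ) - (lam : ℝ)) • t.1 n
        + ∑ k ∈ Finset.Icc 1 (n - lhat), hcoef k *ᵥ t.1 (n - k) = g n)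

/-- Strong-induction engine on integers bounded below. -/
lemma RecEqual.strongInd (lhat : ℤ) (P : ℤ → Prop) (h0 : ∀ m, m < lhat → P m)
    (hstep : ∀ n, lhat ≤ n → (∀ m, m < n → P m) → P n) : ∀ n, P n := by
  have key : ∀ d : ℕ, ∀ n : ℤ, n - lhat < (d : ℤ) → P n := by
    intro d
    induction d with
    | zero => exact fun n hn => h0 n (by omega)
    | succ d ih =>
      intro n hn
      rcases lt_or_ge n lhat with h | h
      · exact h0 n h
      · exact hstep n h (fun m hm => ih m (by omega))
  intro n
  exact key (n - lhat + 1).toNat n (by omega)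

lemma RecEqual.sum_zero (lhat : ℤ) (hcoef : ℤ → Matrix (Fin 2) (Fin 2) ℝ)
    (v : ℤ → Fin 2 → ℝ) (n : ℤ) (hv : ∀ m, m < n → v m = 0) :
    ∑ k ∈ Finset.Icc 1 (n - lhat), hcoef k *ᵥ v (n - k) = 0 := by
  apply Finset.sum_eq_zero
  intro k hk
  obtain ⟨hk1, _⟩ := Finset.mem_Icc.mp hk
  rw [hv (n - k) (by omega), Matrix.mulVec_zero]

/-- Below `λ`, the coefficients `f²` and `f¹` vanish; in fact `f²` vanishes everywhere. -/
lemma RecEqual.vanish (lam lhat : ℤ) (hcoef : ℤ → Matrix (Fin 2) (Fin 2) ℝ)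
    (g : ℤ → Fin 2 → ℝ) (f0 f1 f2 : ℤ → Fin 2 → ℝ)
    (hrec : RecEqual lam lhat hcoef g (f0, f1, f2)) :
    (∀ n, n < lam → f1 n = 0) ∧ (∀ n, f2 n = 0) := by
  obtain ⟨hzero, hrec⟩ := hrec
  dsimp only at hzero hrec
  -- f2 vanishes below lam
  have hf2lt : ∀ n, n < lam → f2 n = 0 := by
    have := RecEqual.strongInd lhat (fun n => n < lam → f2 n = 0)
      (fun m hm _ => (hzero m hm).2.2) ?_
    · exact this
    · intro n hn ih hnlam
      have eqa := (hrec n hn).1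
      rw [RecEqual.sum_zero lhat hcoef f2 n (fun m hm => ih m hm (by omega)),
        add_zero] at eqa
      have hne : ((n : ℝ) - (lam : ℝ)) ≠ 0 := by
        have : (n : ℝ) ≠ (lam : ℝ) := by exact_mod_cast (show n ≠ lam by omega)
        exact sub_ne_zero.mpr this
      exact (smul_eq_zero.mp eqa).resolve_left hne
  -- f1 vanishes below lam
  have hf1lt : ∀ n, n < lam → f1 n = 0 := by
    have := RecEqual.strongInd lhat (fun n => n < lam → f1 n = 0)
      (fun m hm _ => (hzero m hm).2.1) ?_
    · exact this
    · intro n hn ih hnlam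
      have eqb := (hrec n hn).2.1
      rw [hf2lt n hnlam, smul_zero, zero_add,
        RecEqual.sum_zero lhat hcoef f1 n (fun m hm => ih m hm (by omega)),
        add_zero] at eqb
      have hne : ((n : ℝ) - (lam : ℝ)) ≠ 0 := by
        have : (n : ℝ) ≠ (lam : ℝ) := by exact_mod_cast (show n ≠ lam by omega)
        exact sub_ne_zero.mpr this
      exact (smul_eq_zero.mp eqb).resolve_left hne
  refine ⟨hf1lt, ?_⟩
  -- f2 vanishes everywhere
  apply RecEqual.strongInd lhat (fun n => f2 n = 0) (fun m hm => (hzero m hm).2.2)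
  intro n hn ih
  rcases eq_or_ne n lam with rfl | hne
  · have eqb := (hrec n hn).2.1
    rw [sub_self, zero_smul, add_zero,
      RecEqual.sum_zero lhat hcoef f1 n (fun m hm => hf1lt m hm), add_zero] at eqb
    have := (smul_eq_zero.mp eqb).resolve_left (by norm_num : (2 : ℝ) ≠ 0)
    exact this
  · have eqa := (hrec n hn).1
    rw [RecEqual.sum_zero lhat hcoef f2 n ih, add_zero] at eqa
    have hne' : ((n : ℝ) - (lam : ℝ)) ≠ 0 := by
      have : (n : ℝ) ≠ (lam : ℝ) := by exact_mod_cast hne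
      exact sub_ne_zero.mpr this
    exact (smul_eq_zero.mp eqa).resolve_left hne'

/-- Equal indicial exponents exclude squared logarithms and make the no-logs condition
boundary-independent: for any sequences `(f⁰, f¹, f²)` satisfying the recursions, one has
`f²_n = 0` for all `n`; the coefficients `f⁰_n` with `ℓ̂ ≤ n < λ` are uniquely determined
(independently of the free integration constants `f⁰_λ`); and `(f¹)` vanishes identically
iff `Σ_{k=1}^{λ−ℓ̂} h_k·f⁰_{λ−k} = g_λ`. -/
theorem equal_exponents_no_log_squared
    (lam lhat : ℤ) (hle : lhat ≤ lam)
    (hcoef : ℤ → Matrix (Fin 2) (Fin 2) ℝ) (g : ℤ → Fin 2 → ℝ)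
    (f0 f1 f2 : ℤ → Fin 2 → ℝ)
    (hrec : RecEqual lam lhat hcoef g (f0, f1, f2)) :
    (∀ n : ℤ, f2 n = 0) ∧
    (∀ f0' f1' f2' : ℤ → Fin 2 → ℝ, RecEqual lam lhat hcoef g (f0', f1', f2') →
      ∀ n : ℤ, lhat ≤ n → n < lam → f0' n = f0 n) ∧
    ((∀ n : ℤ, f1 n = 0) ↔
      (∑ k ∈ Finset.Icc 1 (lam - lhat), hcoef k *ᵥ f0 (lam - k)) = g lam) := by
  obtain ⟨hf1lt, hf2all⟩ := RecEqual.vanish lam lhat hcoef g f0 f1 f2 hrec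
  obtain ⟨hzero, hrec'⟩ := hrec
  dsimp only at hzero hrec'
  refine ⟨hf2all, ?_, ?_, ?_⟩
  · -- uniqueness of f0 below lam
    intro f0' f1' f2' hrec2 n hn hnlam
    obtain ⟨hf1lt', _⟩ := RecEqual.vanish lam lhat hcoef g f0' f1' f2' hrec2
    obtain ⟨hzero2, hrec2'⟩ := hrec2
    dsimp only at hzero2 hrec2'
    revert hn hnlam
    have : ∀ n, n < lam → f0' n = f0 n := by
      apply RecEqual.strongInd lhat (fun n => n < lam → f0' n = f0 n)
      · intro m hm _
        rw [(hzero2 m hm).1, (hzero m hm).1]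
      · intro n hn ih hnlam
        have eqc := (hrec' n hn).2.2
        have eqc2 := (hrec2' n hn).2.2
        rw [hf1lt n hnlam, zero_add] at eqc
        rw [hf1lt' n hnlam, zero_add] at eqc2
        have hsum : (∑ k ∈ Finset.Icc 1 (n - lhat), hcoef k *ᵥ f0' (n - k))
            = ∑ k ∈ Finset.Icc 1 (n - lhat), hcoef k *ᵥ f0 (n - k) := by
          apply Finset.sum_congr rfl
          intro k hk
          obtain ⟨hk1, _⟩ := Finset.mem_Icc.mp hk
          rw [ih (n - k) (by omega) (by omega)]
        rw [hsum] at eqc2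
        have heq : ((n : ℝ) - (lam : ℝ)) • f0' n = ((n : ℝ) - (lam : ℝ)) • f0 n := by
          have := eqc2.trans eqc.symm
          exact add_right_cancel this
        have hne : ((n : ℝ) - (lam : ℝ)) ≠ 0 := by
          have : (n : ℝ) ≠ (lam : ℝ) := by exact_mod_cast (show n ≠ lam by omega)
          exact sub_ne_zero.mpr this
        exact smul_right_injective (Fin 2 → ℝ) hne heq
    intro hn hnlam
    exact this n hnlam
  · -- forward: f1 ≡ 0 implies the condition
    intro hf1all
    have eqc := (hrec' lam hle).2.2
    rw [hf1all lam, sub_self, zero_smul, add_zero, zero_add] at eqc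
    exact eqc
  · -- backward: condition implies f1 ≡ 0
    intro hcond
    apply RecEqual.strongInd lhat (fun n => f1 n = 0) (fun m hm => (hzero m hm).2.1)
    intro n hn ih
    rcases eq_or_ne n lam with rfl | hne
    · have eqc := (hrec' n hn).2.2
      rw [sub_self, zero_smul, add_zero, hcond] at eqc
      simpa using eqc
    · have eqb := (hrec' n hn).2.1
      rw [hf2all n, smul_zero, zero_add,
        RecEqual.sum_zero lhat hcoef f1 n ih, add_zero] at eqb
      have hne' : ((n : ℝ) - (lam : ℝ)) ≠ 0 := by
        have : (n : ℝ) ≠ (lam : ℝ) := by exact_mod_cast hne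
        exact sub_ne_zero.mpr this
      exact (smul_eq_zero.mp eqb).resolve_left hne'
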